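/- arXiv:2605.16960 — 3 statements merged into one kernel-verified Lean document; each statement's English description precedes it below -/
import Mathlib

section
/- For matrices A, B ∈ ℂ^{n×m} with n ≥ m, the operator (spectral) norm of the Hadamard (entrywise) product satisfies ‖A ∘ B‖₂ ≤ √m · (max_{i,j} |A(i,j)|) · ‖B‖₂. -/
/-!
The spectral norm is bounded by the Frobenius norm, and entrywise
`‖A ∘ B‖_F ≤ (max |A(i,j)|) ‖B‖_F`. Finally `‖B‖_F² = ∑ⱼ ‖B eⱼ‖² ≤ m ‖B‖₂²`, each column of `B`
being the image of a unit vector.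
-/

open scoped Matrix

/-- The operator (spectral) norm of a complex rectangular matrix, i.e. the norm of the
induced linear map between Euclidean spaces. -/
noncomputable def opNormC {n m : ℕ} (A : Matrix (Fin n) (Fin m) ℂ) : ℝ :=
  ‖LinearMap.toContinuousLinearMap (Matrix.toEuclideanLin A)‖

namespace Matrix

open scoped Matrix.Norms.L2Operator

variable {𝕜 ι κ : Type*} [RCLike 𝕜] [Fintype ι] [Fintype κ]

lemma sum_norm_sq_hadamard_le (A B : Matrix ι κ 𝕜) {c : ℝ} (hA : ∀ i j, ‖A i j‖ ≤ c) :
    ∑ i, ∑ j, ‖(A ⊙ B) i j‖ ^ 2 ≤ c ^ 2 * ∑ i, ∑ j, ‖B i j‖ ^ 2 := by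
  simp only [Finset.mul_sum, hadamard_apply, norm_mul, mul_pow]
  gcongr with i _ j _
  exact hA i j

variable [DecidableEq κ]

lemma l2_opNorm_sq_le_sum_norm_sq (M : Matrix ι κ 𝕜) :
    ‖M‖ ^ 2 ≤ ∑ i, ∑ j, ‖M i j‖ ^ 2 := by
  have hF : 0 ≤ ∑ i, ∑ j, ‖M i j‖ ^ 2 := by positivity
  suffices ‖M‖ ≤ √(∑ i, ∑ j, ‖M i j‖ ^ 2) by
    simpa [Real.sq_sqrt hF] using pow_le_pow_left₀ (norm_nonneg _) this 2
  refine ContinuousLinearMap.opNorm_le_bound _ (Real.sqrt_nonneg _) fun x ↦ ?_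
  have hrow (i : ι) : ‖∑ j, M i j * x j‖ ^ 2 ≤ (∑ j, ‖M i j‖ ^ 2) * ‖x‖ ^ 2 := by
    rw [EuclideanSpace.norm_sq_eq]
    calc ‖∑ j, M i j * x j‖ ^ 2 ≤ (∑ j, ‖M i j‖ * ‖x j‖) ^ 2 := by
          gcongr
          exact (norm_sum_le _ _).trans_eq (by simp only [norm_mul])
      _ ≤ _ := Finset.sum_mul_sq_le_sq_mul_sq _ _ _
  rw [← Real.sqrt_sq (norm_nonneg _), ← Real.sqrt_sq (norm_nonneg x), ← Real.sqrt_mul hF]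
  gcongr
  rw [EuclideanSpace.norm_sq_eq, Finset.sum_mul]
  exact Finset.sum_le_sum fun i _ ↦ hrow i

lemma sum_norm_sq_col_le_l2_opNorm_sq (M : Matrix ι κ 𝕜) (j : κ) :
    ∑ i, ‖M i j‖ ^ 2 ≤ ‖M‖ ^ 2 := by
  have h := M.l2_opNorm_mulVec (EuclideanSpace.single j 1)
  rw [PiLp.norm_single, norm_one, mul_one] at h
  calc ∑ i, ‖M i j‖ ^ 2 = ‖(EuclideanSpace.equiv ι 𝕜).symm (M *ᵥ Pi.single j 1)‖ ^ 2 := by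
        rw [EuclideanSpace.norm_sq_eq, mulVec_single_one]; rfl
    _ ≤ ‖M‖ ^ 2 := by gcongr; exact h

lemma sum_norm_sq_le_card_mul_l2_opNorm_sq (M : Matrix ι κ 𝕜) :
    ∑ i, ∑ j, ‖M i j‖ ^ 2 ≤ Fintype.card κ * ‖M‖ ^ 2 := by
  rw [Finset.sum_comm, ← nsmul_eq_mul, ← Finset.card_univ, ← Finset.sum_const]
  exact Finset.sum_le_sum fun j _ ↦ M.sum_norm_sq_col_le_l2_opNorm_sq j

lemma l2_opNorm_hadamard_le (A B : Matrix ι κ 𝕜) {c : ℝ} (hc : 0 ≤ c)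
    (hA : ∀ i j, ‖A i j‖ ≤ c) : ‖A ⊙ B‖ ≤ √(Fintype.card κ) * c * ‖B‖ := by
  refine pow_le_pow_iff_left₀ (norm_nonneg _) (by positivity) two_ne_zero |>.mp ?_
  calc ‖A ⊙ B‖ ^ 2 ≤ c ^ 2 * ∑ i, ∑ j, ‖B i j‖ ^ 2 :=
        (A ⊙ B).l2_opNorm_sq_le_sum_norm_sq.trans (sum_norm_sq_hadamard_le A B hA)
    _ ≤ c ^ 2 * (Fintype.card κ * ‖B‖ ^ 2) := by
        gcongr; exact B.sum_norm_sq_le_card_mul_l2_opNorm_sq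
    _ = (√(Fintype.card κ) * c * ‖B‖) ^ 2 := by
        rw [mul_pow, mul_pow, Real.sq_sqrt (Nat.cast_nonneg _)]; ring

end Matrix

theorem hadamard_opNorm_le_general {n m : ℕ} (A B : Matrix (Fin n) (Fin m) ℂ) :
    opNormC (A ⊙ B) ≤ Real.sqrt m * (⨆ p : Fin n × Fin m, ‖A p.1 p.2‖) * opNormC B := by
  have hA (i : Fin n) (j : Fin m) : ‖A i j‖ ≤ ⨆ p : Fin n × Fin m, ‖A p.1 p.2‖ :=
    le_ciSup (f := fun p : Fin n × Fin m ↦ ‖A p.1 p.2‖) (Set.finite_range _).bddAbove (i, j)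
  have h := Matrix.l2_opNorm_hadamard_le A B (Real.iSup_nonneg fun _ ↦ norm_nonneg _) hA
  rwa [Fintype.card_fin] at h

/-- For matrices `A, B ∈ ℂ^{n×m}` with `n ≥ m`, the spectral norm of the Hadamard product
satisfies `‖A ∘ B‖₂ ≤ √m · (max_{i,j} |A(i,j)|) · ‖B‖₂`. -/
theorem hadamard_opNorm_le {n m : ℕ} (hnm : m ≤ n) (A B : Matrix (Fin n) (Fin m) ℂ) :
    opNormC (A ⊙ B) ≤ Real.sqrt m * (⨆ p : Fin n × Fin m, ‖A p.1 p.2‖) * opNormC B :=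
  hadamard_opNorm_le_general A B
end

section
/- The constant √m in the Hadamard product bound is optimal: there exist n×m matrices A and B with |A(i,j)| = 1 for all i,j such that ‖A ∘ B‖₂ = √m · ‖B‖₂. In particular, B can be taken as the first m columns of the normalized n×n DFT matrix B(i,j) = ω^{(i-1)(j-1)}/√n with ω a primitive n-th root of unity, and A(i,j) = ω^{-(i-1)(j-1)}. -/
open scoped Matrix

/-!
The columns of `B` are orthonormal, so `Bᴴ * B = 1` and `‖B‖₂ = 1`. On the other hand
`A ⊙ B` is the rank-one matrix `u vᴴ` with `u = (1/√n, …, 1/√n) ∈ ℂⁿ` of norm 1 and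
`v = (1, …, 1) ∈ ℂᵐ` of norm `√m`, so `‖A ⊙ B‖₂ = ‖u‖ ‖v‖ = √m`.
-/

open Matrix
open scoped Matrix.Norms.L2Operator

lemma EuclideanSpace.norm_toLp_const {𝕜 ι : Type*} [RCLike 𝕜] [Fintype ι] (c : 𝕜) :
    ‖WithLp.toLp 2 (Function.const ι c)‖ = √(Fintype.card ι) * ‖c‖ := by
  rw [PiLp.norm_toLp_const (by simp), Real.sqrt_eq_rpow]
  simp

namespace Matrix

variable {𝕜 m n : Type*} [RCLike 𝕜] [Fintype m] [Fintype n] [DecidableEq n]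

lemma l2_opNorm_vecMulVec_star (x : EuclideanSpace 𝕜 m) (y : EuclideanSpace 𝕜 n) :
    ‖vecMulVec x (star y)‖ = ‖x‖ * ‖y‖ := by
  rw [← InnerProductSpace.symm_toEuclideanLin_rankOne, l2_opNorm_def, LinearEquiv.trans_apply,
    LinearEquiv.apply_symm_apply]
  exact InnerProductSpace.norm_rankOne x y

lemma l2_opNorm_of_const (c : 𝕜) :
    ‖(of fun (_ : m) (_ : n) => c)‖ = √(Fintype.card m) * √(Fintype.card n) * ‖c‖ := by
  have hrankOne : (of fun (_ : m) (_ : n) => c) =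
      vecMulVec (WithLp.toLp 2 (Function.const m c))
        (star (WithLp.toLp 2 (Function.const n (1 : 𝕜)))) := by
    ext; simp [vecMulVec_apply]
  rw [hrankOne, l2_opNorm_vecMulVec_star, EuclideanSpace.norm_toLp_const,
    EuclideanSpace.norm_toLp_const, norm_one, mul_one]
  ring

lemma l2_opNorm_eq_one_of_conjTranspose_mul_self [Nonempty n] {A : Matrix m n 𝕜}
    (hA : Aᴴ * A = 1) : ‖A‖ = 1 := by
  have h : ‖A‖ * ‖A‖ = 1 := by
    rw [← l2_opNorm_conjTranspose_mul_self, hA, ← diagonal_one, l2_opNorm_diagonal]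
    simp
  nlinarith [norm_nonneg A]

end Matrix

lemma IsPrimitiveRoot.sum_inv_pow_mul_pow {K : Type*} [Field K] {ω : K} {n : ℕ}
    (hω : IsPrimitiveRoot ω n) {j k : ℕ} (hj : j < n) (hk : k < n) :
    ∑ i ∈ Finset.range n, ω⁻¹ ^ (i * j) * ω ^ (i * k) = if j = k then (n : K) else 0 := by
  have hω0 : ω ≠ 0 := hω.ne_zero (by omega)
  set ζ := (ω ^ j)⁻¹ * ω ^ k with hζ
  have hterm (i : ℕ) : ω⁻¹ ^ (i * j) * ω ^ (i * k) = ζ ^ i := by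
    rw [hζ]; ring
  simp_rw [hterm]
  split_ifs with hjk
  · simp [hζ, hjk, hω0]
  · have hζ1 : ζ ≠ 1 := fun h => hjk <|
      hω.pow_inj hj hk ((inv_mul_eq_one₀ (pow_ne_zero j hω0)).1 h)
    have hζn : ζ ^ n = 1 := by
      rw [hζ, mul_pow, inv_pow, pow_right_comm, pow_right_comm ω k, hω.pow_eq_one, one_pow,
        one_pow, inv_one, one_mul]
    rw [geom_sum_eq hζ1, hζn, sub_self, zero_div]

noncomputable def dftColumns (n m : ℕ) (ω : ℂ) : Matrix (Fin n) (Fin m) ℂ :=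
  of fun i j => ω ^ ((i : ℕ) * (j : ℕ)) / (Real.sqrt n : ℂ)

lemma conjTranspose_dftColumns_mul_self {n m : ℕ} {ω : ℂ} (hω : IsPrimitiveRoot ω n)
    (hmn : m ≤ n) : (dftColumns n m ω)ᴴ * dftColumns n m ω = 1 := by
  ext j k
  have hn : n ≠ 0 := by have := j.isLt; omega
  have hconj : star ω = ω⁻¹ := (Complex.inv_eq_conj (hω.norm'_eq_one hn)).symm
  have hsqrt : (Real.sqrt n : ℂ) * (Real.sqrt n : ℂ) = n := by
    rw [← Complex.ofReal_mul, Real.mul_self_sqrt n.cast_nonneg, Complex.ofReal_natCast]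
  have hsum := hω.sum_inv_pow_mul_pow (j.isLt.trans_le hmn) (k.isLt.trans_le hmn)
  rw [← Fin.sum_univ_eq_sum_range (fun i => ω⁻¹ ^ (i * j) * ω ^ (i * k))] at hsum
  simp only [mul_apply, conjTranspose_apply, dftColumns, of_apply, star_div₀, star_pow, hconj,
    Complex.star_def, Complex.conj_ofReal, div_mul_div_comm, hsqrt, ← Finset.sum_div, hsum,
    Fin.val_inj, one_apply]
  split_ifs <;> simp [hn]

lemma opNormC_eq_l2_opNorm {n m : ℕ} (A : Matrix (Fin n) (Fin m) ℂ) : opNormC A = ‖A‖ := rfl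

/-- The constant `√m` in the Hadamard product bound is optimal: there exist `n×m` matrices
`A` and `B` with all entries of `A` of modulus 1 such that `‖A ∘ B‖₂ = √m · ‖B‖₂`.
In particular, `B` can be taken as the first `m` columns of the normalized DFT matrix
`B(i,j) = ω^{(i-1)(j-1)}/√n` with `ω` a primitive `n`-th root of unity, and
`A(i,j) = ω^{-(i-1)(j-1)}`. -/
theorem hadamard_opNorm_sqrt_optimal {n m : ℕ} (hm : 0 < m) (hmn : m ≤ n) :
    ∃ A B : Matrix (Fin n) (Fin m) ℂ,
      (∀ i j, ‖A i j‖ = 1) ∧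
      opNormC (A ⊙ B) = Real.sqrt m * opNormC B ∧
      ∃ ω : ℂ, IsPrimitiveRoot ω n ∧
        (∀ i j, A i j = ω⁻¹ ^ ((i : ℕ) * (j : ℕ))) ∧
        (∀ i j, B i j = ω ^ ((i : ℕ) * (j : ℕ)) / (Real.sqrt n : ℂ)) := by
  have hn : 0 < n := hm.trans_le hmn
  have : Nonempty (Fin m) := ⟨⟨0, hm⟩⟩
  obtain ⟨ω, hω⟩ : ∃ ω : ℂ, IsPrimitiveRoot ω n :=
    ⟨_, Complex.isPrimitiveRoot_exp n hn.ne'⟩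
  set A : Matrix (Fin n) (Fin m) ℂ := of fun i j => ω⁻¹ ^ ((i : ℕ) * (j : ℕ))
  have hAB : A ⊙ dftColumns n m ω = of fun _ _ => (Real.sqrt n : ℂ)⁻¹ := by
    ext; simp [A, dftColumns, hω.ne_zero hn.ne', div_eq_mul_inv]
  refine ⟨A, dftColumns n m ω, fun i j => by simp [A, hω.norm'_eq_one hn.ne'], ?_,
    ω, hω, fun _ _ => rfl, fun _ _ => rfl⟩
  rw [opNormC_eq_l2_opNorm, opNormC_eq_l2_opNorm, hAB, l2_opNorm_of_const,
    l2_opNorm_eq_one_of_conjTranspose_mul_self (conjTranspose_dftColumns_mul_self hω hmn),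
    Fintype.card_fin, Fintype.card_fin, norm_inv, Complex.norm_real,
    Real.norm_of_nonneg (Real.sqrt_nonneg _), mul_one]
  have hsqrt : √(n : ℝ) ≠ 0 := by positivity
  field_simp
end

section
/- For a vector a ∈ ℝ^M with entries sorted in descending order, there exists an integer N with 1 ≤ N ≤ M such that a_N − (1/N)(∑_{n=1}^N a_n − 1) ≥ 0 and (if N < M) a_{N+1} − (1/N)(∑_{n=1}^N a_n − 1) < 0; moreover, the vector y* defined by y*_m = a_m − (1/N)(∑_{n=1}^N a_n − 1) for m ≤ N and y*_m = 0 for m > N is the Euclidean projection of a onto the probability simplex Δ = {y ∈ ℝ^M : y ≥ 0, ∑_m y_m = 1}, i.e., it minimizes ‖y − a‖₂² over y ∈ Δ. -/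
/-!
The threshold `N` is the largest `k ≤ M` with `(∑_{n ≤ k} a_n - 1) / k ≤ a_k`; maximality gives
the strict inequality at `N + 1`, and sortedness then shows that `y*_m = max (a_m - t) 0` with
`t = (∑_{n ≤ N} a_n - 1) / N`. These are the KKT conditions of the projection onto the simplex
with multiplier `t`: for every `z` in the simplex `∑ (z - y*)(y* - a) ≥ t (∑ y* - ∑ z) = 0`,
and expanding `‖z - a‖²` around `y*` gives the minimality.
-/

open Finset

theorem sum_sq_sub_le_of_kkt {ι : Type*} [Fintype ι] {a y z : ι → ℝ} {t : ℝ}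
    (hy : ∀ p, y p = a p - t ∨ y p = 0 ∧ a p ≤ t) (hz : ∀ p, 0 ≤ z p)
    (hsum : ∑ p, z p = ∑ p, y p) :
    ∑ p, (y p - a p) ^ 2 ≤ ∑ p, (z p - a p) ^ 2 := by
  have key : ∀ p, t * (y p - z p) ≤ (z p - y p) * (y p - a p) := by
    intro p
    rcases hy p with h | ⟨h, hat⟩ <;> rw [h]
    · exact le_of_eq (by ring)
    · nlinarith [mul_le_mul_of_nonneg_left hat (hz p)]
  have cross : 0 ≤ ∑ p, (z p - y p) * (y p - a p) :=
    calc 0 = t * (∑ p, y p - ∑ p, z p) := by rw [hsum, sub_self, mul_zero]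
      _ = ∑ p, t * (y p - z p) := by rw [← sum_sub_distrib, mul_sum]
      _ ≤ _ := sum_le_sum fun p _ => key p
  have expand : ∑ p, (z p - a p) ^ 2 - ∑ p, (y p - a p) ^ 2 =
      ∑ p, (z p - y p) ^ 2 + 2 * ∑ p, (z p - y p) * (y p - a p) := by
    rw [← sum_sub_distrib, mul_sum, ← sum_add_distrib]
    exact sum_congr rfl fun p _ => by ring
  linarith [sum_nonneg fun p (_ : p ∈ univ) => sq_nonneg (z p - y p)]

section prefixSum

variable {M : ℕ} (a : Fin M → ℝ)

def prefixSum (k : ℕ) : ℝ := ∑ i : Fin M, if (i : ℕ) < k then a i else 0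

theorem prefixSum_zero : prefixSum a 0 = 0 := by simp [prefixSum]

theorem prefixSum_succ {k : ℕ} (hk : k < M) :
    prefixSum a (k + 1) = prefixSum a k + a ⟨k, hk⟩ := by
  have hite : ∀ i : Fin M, (if (i : ℕ) < k + 1 then a i else 0) =
      (if (i : ℕ) < k then a i else 0) + if i = ⟨k, hk⟩ then a i else 0 := by
    intro i
    simp only [Fin.ext_iff]
    split_ifs <;> first | omega | simp
  simp only [prefixSum, hite, sum_add_distrib, sum_ite_eq', mem_univ, if_true]

theorem prefixSum_one (hM : 0 < M) : prefixSum a 1 = a ⟨0, hM⟩ := by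
  rw [prefixSum_succ a hM, prefixSum_zero, zero_add]

theorem sum_ite_lt_sub_const {N : ℕ} (hNM : N ≤ M) (t : ℝ) :
    ∑ p : Fin M, (if (p : ℕ) < N then a p - t else 0) = prefixSum a N - N * t := by
  have hcard : #{p : Fin M | (p : ℕ) < N} = N := by rw [Fin.card_filter_val_lt]; omega
  simp only [prefixSum, sum_ite, sum_const_zero, add_zero, sum_sub_distrib, sum_const, hcard,
    nsmul_eq_mul]

theorem exists_simplex_threshold (hM : 1 ≤ M) :
    ∃ N : ℕ, ∃ hN1 : 1 ≤ N, ∃ hNM : N ≤ M,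
      (prefixSum a N - 1) / N ≤ a ⟨N - 1, Nat.sub_one_lt_of_le hN1 hNM⟩ ∧
      ∀ h : N < M, a ⟨N, h⟩ < (prefixSum a N - 1) / N := by
  classical
  let P : ℕ → Prop := fun k =>
    1 ≤ k ∧ ∀ h : k - 1 < M, prefixSum a k - 1 ≤ k * a ⟨k - 1, h⟩
  have hP1 : P 1 := ⟨le_rfl, fun h => by rw [prefixSum_one a h]; push_cast; linarith⟩
  set N := Nat.findGreatest P M
  have hPN : P N := Nat.findGreatest_spec hM hP1
  have hNM : N ≤ M := Nat.findGreatest_le M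
  have hNpos : (0 : ℝ) < N := by exact_mod_cast hPN.1
  refine ⟨N, hPN.1, hNM, ?_, fun h => ?_⟩
  · rw [div_le_iff₀ hNpos, mul_comm]
    linarith [hPN.2 (by omega)]
  · have hnext : ¬P (N + 1) := Nat.findGreatest_is_greatest (Nat.lt_succ_self N) h
    have hgt : (N + 1 : ℝ) * a ⟨N, h⟩ < prefixSum a (N + 1) - 1 := by
      by_contra! hle
      exact hnext ⟨by omega, fun _ => by push_cast; exact hle⟩
    rw [prefixSum_succ a h] at hgt
    rw [lt_div_iff₀ hNpos, mul_comm]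
    linarith

end prefixSum

/-- Euclidean projection onto the probability simplex via the sorted-threshold formula:
for `a ∈ ℝ^M` sorted in descending order there is `1 ≤ N ≤ M` such that
`a_N − (1/N)(∑_{n=1}^N a_n − 1) ≥ 0`, `a_{N+1} − (1/N)(∑_{n=1}^N a_n − 1) < 0` (if `N < M`),
and the vector `y*` with `y*_m = a_m − (1/N)(∑_{n=1}^N a_n − 1)` for `m ≤ N` and `0` otherwise
minimizes `‖y − a‖₂²` over the simplex `Δ`. -/
theorem simplex_projection_threshold {M : ℕ} (hM : 1 ≤ M) (a : Fin M → ℝ)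
    (hsort : ∀ i j : Fin M, i ≤ j → a j ≤ a i) :
    ∃ N : ℕ, ∃ hN1 : 1 ≤ N, ∃ hNM : N ≤ M,
      (a ⟨N - 1, by omega⟩ -
          ((∑ i : Fin M, if (i : ℕ) < N then a i else 0) - 1) / N ≥ 0) ∧
      (∀ h : N < M, a ⟨N, h⟩ -
          ((∑ i : Fin M, if (i : ℕ) < N then a i else 0) - 1) / N < 0) ∧
      (let y : Fin M → ℝ := fun p =>
        if (p : ℕ) < N then
          a p - ((∑ i : Fin M, if (i : ℕ) < N then a i else 0) - 1) / N
        else 0;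
      (∀ p, 0 ≤ y p) ∧ (∑ p, y p = 1) ∧
        ∀ z : Fin M → ℝ, (∀ p, 0 ≤ z p) → (∑ p, z p = 1) →
          ∑ p, (y p - a p) ^ 2 ≤ ∑ p, (z p - a p) ^ 2) := by
  obtain ⟨N, hN1, hNM, hlast, hnext⟩ := exists_simplex_threshold a hM
  set t := (prefixSum a N - 1) / N with ht
  refine ⟨N, hN1, hNM, sub_nonneg.2 hlast, fun h => sub_neg.2 (hnext h), ?_⟩
  intro y
  have hkkt : ∀ p, y p = a p - t ∨ y p = 0 ∧ a p ≤ t := by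
    intro p
    by_cases hp : (p : ℕ) < N
    · exact .inl (if_pos hp)
    · have hNp : N < M := by omega
      refine .inr ⟨if_neg hp, ?_⟩
      exact (hsort ⟨N, hNp⟩ p (Fin.le_def.2 (show N ≤ (p : ℕ) by omega))).trans (hnext hNp).le
  have hnonneg : ∀ p, 0 ≤ y p := by
    intro p
    by_cases hp : (p : ℕ) < N
    · rw [show y p = a p - t from if_pos hp, sub_nonneg]
      exact hlast.trans (hsort p _ (Fin.le_def.2 (show (p : ℕ) ≤ N - 1 by omega)))
    · rw [show y p = 0 from if_neg hp]
  have hsum : ∑ p, y p = 1 := by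
    change ∑ p : Fin M, (if (p : ℕ) < N then a p - t else 0) = 1
    rw [sum_ite_lt_sub_const a hNM, ht]
    field_simp
    ring
  exact ⟨hnonneg, hsum, fun z hz hz1 => sum_sq_sub_le_of_kkt hkkt hz (hz1.trans hsum.symm)⟩
end
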